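/- Let F = {x^{v_1},...,x^{v_q}} be a finite set of monomials of the same degree d ≥ 2 in k[x_1,...,x_n]. The following are equivalent: (a) k[F] ⊆ k[x_d] is birational; (b) ℤ^n/ℤ⟨v_1 - v_j : 2 ≤ j ≤ q⟩ is free of rank 1; (c) the log-matrix A has rank n and ℤ⟨v_1 - v_j : 2 ≤ j ≤ q⟩ = ℤ⟨e_1 - e_k : 2 ≤ k ≤ n⟩. -/

import Mathlib

/-!
Write `σ` for the coordinate sum on `ℤ^n` and `Λ` for the lattice spanned by the exponent vectors
`v_j`. As every `v_j` has coordinate sum `d ≠ 0`, `V = Λ ∩ ker σ`, and `ker σ` is spanned by the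
`e_1 - e_k`; each of the three conditions turns out to say `ker σ ⊆ Λ`.
For (a): a monomial `x^w` lies in `Frac k[F]` iff `w ∈ Λ`. One direction writes `x^w` as a product
of the `x^{v_j}^{±1}`; for the other, `x^w = f / g` with `f, g ∈ k[F]` gives `w = (w + u) - u`
with `u` in the support of `g` and `w + u` in that of `f`, both in the monoid generated by the
`v_j`. Then `ker σ ⊆ Λ` follows from `e_1 - e_k = d e_1 - ((d - 1) e_1 + e_k)`.
For (b): `σ` induces a surjection `ℤ^n / V → ℤ`; if `ℤ^n / V ≅ ℤ` it is injective, since a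
surjective endomorphism of `ℤ` is. For (c): if `ker σ ⊆ Λ`, then `d e_i ∈ Λ` for all `i`, so the
columns of the log-matrix span `ℚ^n`.
-/

open MvPolynomial

/-- The fraction field (inside `Frac(k[x])`) of the subalgebra generated by a set of
polynomials. -/
noncomputable def fractionFieldOf (n : ℕ) (k : Type*) [Field k]
    (S : Set (MvPolynomial (Fin n) k)) :
    Subfield (FractionRing (MvPolynomial (Fin n) k)) :=
  Subfield.closure
    ((algebraMap (MvPolynomial (Fin n) k) (FractionRing (MvPolynomial (Fin n) k))) ''
      (Algebra.adjoin k S : Set (MvPolynomial (Fin n) k)))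

theorem Submodule.free_quotient_and_rank_eq_one_iff {R M : Type*} [CommRing R]
    [StrongRankCondition R] [AddCommGroup M] [Module R M] {f : M →ₗ[R] R}
    (hf : Function.Surjective f) {V : Submodule R M} (hV : V ≤ LinearMap.ker f) :
    (Module.Free R (M ⧸ V) ∧ Module.rank R (M ⧸ V) = 1) ↔ V = LinearMap.ker f := by
  constructor
  · rintro ⟨hfree, hrank⟩
    obtain ⟨e⟩ := nonempty_linearEquiv_of_lift_rank_eq (M' := R) <| by
      rw [hrank, Module.rank_self, Cardinal.lift_one, Cardinal.lift_one]
    set g := V.liftQ f hV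
    have hg : Function.Surjective g := by
      rw [← LinearMap.range_eq_top, Submodule.range_liftQ, LinearMap.range_eq_top]
      exact hf
    -- a surjective endomorphism of `R` is injective, and `M ⧸ V ≃ R`
    have hginj : Function.Injective g := by
      have := OrzechProperty.injective_of_surjective_endomorphism (g ∘ₗ e.symm.toLinearMap)
        (hg.comp e.symm.surjective)
      simpa using this.comp e.injective
    refine le_antisymm hV fun x hx => (Submodule.Quotient.mk_eq_zero V).1 (hginj ?_)
    simpa [g] using hx
  · rintro rfl
    let e := f.quotKerEquivOfSurjective hf
    exact ⟨Module.Free.of_equiv e.symm, by simpa using e.lift_rank_eq⟩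

section CoordSum

variable {ι : Type*} [Fintype ι]

@[simps]
def coordSum : (ι → ℤ) →ₗ[ℤ] ℤ where
  toFun u := ∑ i, u i
  map_add' _ _ := Finset.sum_add_distrib
  map_smul' _ _ := (Finset.mul_sum _ _ _).symm

variable [DecidableEq ι]

theorem coordSum_surjective [Nonempty ι] :
    Function.Surjective (coordSum : (ι → ℤ) →ₗ[ℤ] ℤ) :=
  fun c => ⟨Pi.single (Classical.arbitrary ι) c, by simp⟩

theorem span_single_sub_single_eq_ker_coordSum (i₀ : ι) :
    Submodule.span ℤ {w : ι → ℤ | ∃ k, k ≠ i₀ ∧ w = Pi.single i₀ 1 - Pi.single k 1} =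
      LinearMap.ker coordSum := by
  refine le_antisymm (Submodule.span_le.2 ?_) fun u hu => ?_
  · rintro _ ⟨k, -, rfl⟩
    simp
  have hu : ∑ i, u i = 0 := hu
  have hdecomp : u = ∑ k, (-u k) • (Pi.single i₀ 1 - Pi.single k 1 : ι → ℤ) := by
    simp only [smul_sub, Finset.sum_sub_distrib, ← Finset.sum_smul, Finset.sum_neg_distrib, hu,
      neg_zero, zero_smul, zero_sub, neg_smul, neg_neg]
    exact pi_eq_sum_univ' u
  rw [hdecomp]
  refine Submodule.sum_mem _ fun k _ => Submodule.smul_mem _ _ ?_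
  rcases eq_or_ne k i₀ with rfl | hk
  · simp
  · exact Submodule.subset_span ⟨k, hk, rfl⟩

end CoordSum

theorem Submodule.span_range_sub_eq_span_inf_ker {R M : Type*} [CommRing R] [NoZeroDivisors R]
    [AddCommGroup M] [Module R M] {q : ℕ} {u : Fin (q + 1) → M} {f : M →ₗ[R] R} {d : R}
    (hd : d ≠ 0) (hu : ∀ j, f (u j) = d) :
    span R (Set.range fun j : Fin q => u 0 - u j.succ) =
      span R (Set.range u) ⊓ LinearMap.ker f := by
  refine le_antisymm (span_le.2 ?_) fun x ⟨hx, hfx⟩ => ?_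
  · rintro _ ⟨j, rfl⟩
    exact ⟨sub_mem (subset_span ⟨0, rfl⟩) (subset_span ⟨j.succ, rfl⟩),
      by simp [LinearMap.mem_ker, hu]⟩
  obtain ⟨m, rfl⟩ := mem_span_range_iff_exists_fun R |>.1 hx
  have hm : ∑ j, m j = 0 := by
    have : (∑ j, m j) * d = 0 := by simpa [Finset.sum_mul, hu] using hfx
    exact (mul_eq_zero.1 this).resolve_right hd
  -- subtracting `(∑ j, m j) • u 0 = 0` rewrites the combination in terms of the `u j - u 0`
  have hdecomp : ∑ j, m j • u j = ∑ j : Fin q, (-m j.succ) • (u 0 - u j.succ) := by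
    calc ∑ j, m j • u j = ∑ j, m j • (u j - u 0) := by
          simp [smul_sub, Finset.sum_sub_distrib, ← Finset.sum_smul, hm]
      _ = _ := by simp [Fin.sum_univ_succ, ← smul_neg]
  rw [hdecomp]
  exact sum_mem fun j _ => smul_mem _ _ (subset_span ⟨j, rfl⟩)

section ExponentLattice

variable {ι : Type*}

@[simps]
def expVec : (ι →₀ ℕ) →+ (ι → ℤ) where
  toFun w i := w i
  map_zero' := by ext; simp
  map_add' _ _ := by ext; simp

theorem expVec_single [DecidableEq ι] (i : ι) (a : ℕ) :
    expVec (Finsupp.single i a) = Pi.single i (a : ℤ) := by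
  ext j
  simp [Finsupp.single_apply, Pi.single_apply, eq_comm]

variable [Fintype ι]

theorem coordSum_expVec (w : ι →₀ ℕ) : coordSum (expVec w) = ∑ i, w i := by
  simp

theorem forall_expVec_mem_iff_ker_coordSum_le [DecidableEq ι] {Λ : Submodule ℤ (ι → ℤ)}
    {d : ℕ} (hd : d ≠ 0) {w₀ : ι →₀ ℕ} (hw₀ : ∑ i, w₀ i = d) (hΛ : expVec w₀ ∈ Λ) :
    (∀ w : ι →₀ ℕ, ∑ i, w i = d → expVec w ∈ Λ) ↔ LinearMap.ker coordSum ≤ Λ := by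
  constructor
  · intro h
    obtain ⟨i₀, -, -⟩ := Finset.exists_ne_zero_of_sum_ne_zero (hw₀.trans_ne hd)
    rw [← span_single_sub_single_eq_ker_coordSum i₀, Submodule.span_le]
    rintro _ ⟨k, hk, rfl⟩
    -- `e i₀ - e k` is the difference of the exponents of `x_{i₀}^d` and `x_{i₀}^(d-1) x_k`
    have hsub := sub_mem (h (.single i₀ d) (by simp))
      (h (.single i₀ (d - 1) + .single k 1) (by
        simp only [Finsupp.coe_add, Pi.add_apply, Finset.sum_add_distrib, Finsupp.single_apply,
          Finset.sum_ite_eq, Finset.mem_univ, if_true]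
        omega))
    rw [SetLike.mem_coe]
    convert hsub using 1
    rw [map_add, expVec_single, expVec_single, expVec_single, Nat.cast_pred (by omega),
      ← sub_sub, ← Pi.single_sub, sub_sub_cancel, Nat.cast_one]
  · intro h w hw
    have hker : expVec w - expVec w₀ ∈ LinearMap.ker coordSum := by
      simp only [LinearMap.mem_ker, map_sub, coordSum_expVec, hw, hw₀, sub_self]
    simpa using add_mem (h hker) hΛ

theorem rank_eq_card_of_ker_coordSum_le {κ : Type*} [Fintype κ] [DecidableEq ι]
    {v : κ → ι →₀ ℕ}
    (hker : LinearMap.ker coordSum ≤ Submodule.span ℤ (Set.range fun j => expVec (v j)))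
    {j₀ : κ} (hj₀ : ∑ i, v j₀ i ≠ 0) :
    (Matrix.of fun i j => (v j i : ℚ)).rank = Fintype.card ι := by
  set S := Submodule.span ℚ (Set.range (Matrix.of fun i j => (v j i : ℚ)).col)
  let c : (ι → ℤ) →ₗ[ℤ] (ι → ℚ) := (Int.castAddHom ℚ).toIntLinearMap.compLeft ι
  have hΛ : Submodule.span ℤ (Set.range fun j => expVec (v j)) ≤ (S.restrictScalars ℤ).comap c :=
    Submodule.span_le.2 <| Set.range_subset_iff.2 fun j =>
      Submodule.subset_span ⟨j, funext fun i => by simp [c]⟩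
  -- `D • e i` lies in the lattice, where `D ≠ 0` is the degree of `v j₀`
  have hsingle : ∀ i, (Pi.single i 1 : ι → ℚ) ∈ S := by
    intro i
    set D := ∑ i, v j₀ i
    have hker' : Pi.single i (D : ℤ) - expVec (v j₀) ∈ LinearMap.ker coordSum := by
      rw [LinearMap.mem_ker, map_sub, coordSum_expVec, sub_eq_zero]
      simp [D]
    have hmem := hΛ (by simpa using add_mem (hker hker') (Submodule.subset_span ⟨j₀, rfl⟩))
    have hcast : c (Pi.single i (D : ℤ)) = (D : ℚ) • Pi.single i 1 := by
      ext j; simp [c, Pi.single_apply]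
    rw [Submodule.mem_comap, hcast, Submodule.restrictScalars_mem] at hmem
    simpa [hj₀] using S.smul_mem (D : ℚ)⁻¹ hmem
  have hS : S = ⊤ := by
    rw [eq_top_iff, ← (Pi.basisFun ℚ ι).span_eq, Submodule.span_le]
    rintro _ ⟨i, rfl⟩
    simpa using hsingle i
  rw [Matrix.rank_eq_finrank_span_cols]
  change Module.finrank ℚ S = _
  rw [hS, finrank_top, Module.finrank_fintype_fun_eq_card]

end ExponentLattice

theorem MvPolynomial.support_subset_closure_of_mem_adjoin_monomial {σ κ R : Type*}
    [CommSemiring R] {v : κ → σ →₀ ℕ} {p : MvPolynomial σ R}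
    (hp : p ∈ Algebra.adjoin R (Set.range fun j => monomial (v j) (1 : R))) :
    (p.support : Set (σ →₀ ℕ)) ⊆ AddSubmonoid.closure (Set.range v) := by
  classical
  set M := AddSubmonoid.closure (Set.range v)
  let T : Subalgebra R (MvPolynomial σ R) :=
    { carrier := {p | (p.support : Set (σ →₀ ℕ)) ⊆ M}
      mul_mem' := fun {a b} ha hb u hu => by
        obtain ⟨y, hy, z, hz, rfl⟩ := Finset.mem_add.1 (support_mul a b hu)
        exact M.add_mem (ha hy) (hb hz)
      add_mem' := fun {a b} ha hb u hu =>
        (Finset.mem_union.1 (support_add hu)).elim (fun h => ha h) (fun h => hb h)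
      algebraMap_mem' := fun c u hu => by
        rw [algebraMap_eq, ← monomial_zero', Finset.mem_coe] at hu
        rw [Finset.mem_singleton.1 (support_monomial_subset hu)]
        exact M.zero_mem }
  have hle : Algebra.adjoin R (Set.range fun j => monomial (v j) (1 : R)) ≤ T := by
    rw [Algebra.adjoin_le_iff]
    rintro _ ⟨j, rfl⟩ u hu
    rw [Finset.mem_singleton.1 (support_monomial_subset hu)]
    exact AddSubmonoid.subset_closure ⟨j, rfl⟩
  exact hle hp

section FractionField

variable {n : ℕ} {k : Type*} [Field k]

local notation "K" => FractionRing (MvPolynomial (Fin n) k)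

theorem mem_fractionFieldOf_iff {S : Set (MvPolynomial (Fin n) k)} {x : K} :
    x ∈ fractionFieldOf n k S ↔ ∃ f ∈ Algebra.adjoin k S, ∃ g ∈ Algebra.adjoin k S,
      algebraMap _ K f / algebraMap _ K g = x := by
  have himage : algebraMap _ K '' (Algebra.adjoin k S : Set (MvPolynomial (Fin n) k)) =
      ((Algebra.adjoin k S).toSubring.map (algebraMap _ K) : Set K) := rfl
  rw [fractionFieldOf, Subfield.mem_closure_iff, himage, Subring.closure_eq]
  constructor
  · rintro ⟨_, ⟨f, hf, rfl⟩, _, ⟨g, hg, rfl⟩, hx⟩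
    exact ⟨f, hf, g, hg, hx⟩
  · rintro ⟨f, hf, g, hg, hx⟩
    exact ⟨_, ⟨f, hf, rfl⟩, _, ⟨g, hg, rfl⟩, hx⟩

theorem algebraMap_mem_fractionFieldOf {S : Set (MvPolynomial (Fin n) k)}
    {p : MvPolynomial (Fin n) k} (hp : p ∈ Algebra.adjoin k S) :
    algebraMap _ K p ∈ fractionFieldOf n k S :=
  Subfield.subset_closure ⟨p, hp, rfl⟩

theorem fractionFieldOf_le_fractionFieldOf {S T : Set (MvPolynomial (Fin n) k)}
    (h : ∀ p ∈ S, algebraMap _ K p ∈ fractionFieldOf n k T) :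
    fractionFieldOf n k S ≤ fractionFieldOf n k T := by
  refine Subfield.closure_le.2 ?_
  rintro _ ⟨p, hp, rfl⟩
  induction hp using Algebra.adjoin_induction with
  | mem p hp => exact h p hp
  | algebraMap c => exact algebraMap_mem_fractionFieldOf (Subalgebra.algebraMap_mem _ c)
  | add p p' _ _ hp hp' => simpa only [map_add, SetLike.mem_coe] using add_mem hp hp'
  | mul p p' _ _ hp hp' => simpa only [map_mul, SetLike.mem_coe] using mul_mem hp hp'

variable (n k) in
noncomputable def laurentMonomial (u : Fin n → ℤ) : K :=
  ∏ i, algebraMap _ K (X i : MvPolynomial (Fin n) k) ^ u i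

theorem algebraMap_X_ne_zero (i : Fin n) : algebraMap _ K (X i : MvPolynomial (Fin n) k) ≠ 0 :=
  (map_ne_zero_iff _ (IsFractionRing.injective _ _)).2 (X_ne_zero i)

theorem laurentMonomial_add (a b : Fin n → ℤ) :
    laurentMonomial n k (a + b) = laurentMonomial n k a * laurentMonomial n k b := by
  simp only [laurentMonomial, ← Finset.prod_mul_distrib, Pi.add_apply]
  exact Finset.prod_congr rfl fun i _ => zpow_add₀ (algebraMap_X_ne_zero i) _ _

theorem laurentMonomial_neg (a : Fin n → ℤ) :
    laurentMonomial n k (-a) = (laurentMonomial n k a)⁻¹ := by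
  simp only [laurentMonomial, ← Finset.prod_inv_distrib, Pi.neg_apply, zpow_neg]

theorem laurentMonomial_expVec (w : Fin n →₀ ℕ) :
    laurentMonomial n k (expVec w) = algebraMap _ K (monomial w (1 : k)) := by
  rw [monomial_eq, C_1, one_mul, Finsupp.prod_fintype _ _ fun i => pow_zero _, map_prod]
  simp [laurentMonomial]

theorem algebraMap_monomial_mem_fractionFieldOf_iff {κ : Type*} (v : κ → Fin n →₀ ℕ)
    (w : Fin n →₀ ℕ) :
    algebraMap _ K (monomial w (1 : k)) ∈
        fractionFieldOf n k (Set.range fun j => monomial (v j) (1 : k)) ↔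
      expVec w ∈ Submodule.span ℤ (Set.range fun j => expVec (v j)) := by
  set E := fractionFieldOf n k (Set.range fun j => monomial (v j) (1 : k))
  set Λ := Submodule.span ℤ (Set.range fun j => expVec (v j))
  constructor
  · rw [mem_fractionFieldOf_iff]
    rintro ⟨f, hf, g, hg, hfg⟩
    have hinj := IsFractionRing.injective (MvPolynomial (Fin n) k) K
    have hg0 : g ≠ 0 := by
      rintro rfl
      rw [map_zero, div_zero, eq_comm, map_eq_zero_iff _ hinj, monomial_eq_zero] at hfg
      exact one_ne_zero hfg
    have hf_eq : f = monomial w 1 * g := hinj <| by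
      rw [map_mul, ← hfg, div_mul_cancel₀ _ ((map_ne_zero_iff _ hinj).2 hg0)]
    -- for `u` in the support of `g`, both `w + u` and `u` are exponents of elements of `k[F]`
    obtain ⟨u, hu⟩ := support_nonempty.2 hg0
    have hwu : w + u ∈ f.support := by
      rw [mem_support_iff, hf_eq, coeff_monomial_mul, one_mul]
      exact mem_support_iff.1 hu
    have hclosure :
        AddSubmonoid.closure (Set.range v) ≤ Λ.toAddSubgroup.toAddSubmonoid.comap expVec :=
      AddSubmonoid.closure_le.2 (Set.range_subset_iff.2 fun j => Submodule.subset_span ⟨j, rfl⟩)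
    have h1 : expVec (w + u) ∈ Λ :=
      hclosure (support_subset_closure_of_mem_adjoin_monomial hf hwu)
    have h2 : expVec u ∈ Λ := hclosure (support_subset_closure_of_mem_adjoin_monomial hg hu)
    simpa using sub_mem h1 h2
  · intro hw
    let G : AddSubgroup (Fin n → ℤ) :=
      { carrier := {u | laurentMonomial n k u ∈ E}
        add_mem' := fun {a b} (ha : _ ∈ E) (hb : _ ∈ E) => by
          simpa only [Set.mem_ofPred_eq, laurentMonomial_add] using mul_mem ha hb
        zero_mem' := by simp [laurentMonomial]
        neg_mem' := fun {a} (ha : _ ∈ E) => by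
          simpa only [Set.mem_ofPred_eq, laurentMonomial_neg] using inv_mem ha }
    have hΛG : Λ ≤ G.toIntSubmodule := Submodule.span_le.2 <| Set.range_subset_iff.2 fun j => by
      change laurentMonomial n k (expVec (v j)) ∈ E
      rw [laurentMonomial_expVec]
      exact algebraMap_mem_fractionFieldOf (Algebra.subset_adjoin ⟨j, rfl⟩)
    rw [← laurentMonomial_expVec]
    exact hΛG hw

theorem fractionFieldOf_eq_iff_forall_expVec_mem {κ : Type*} (v : κ → Fin n →₀ ℕ) {d : ℕ}
    (hdeg : ∀ j, ∑ i, v j i = d) :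
    fractionFieldOf n k (Set.range fun j => monomial (v j) (1 : k)) =
        fractionFieldOf n k {p | ∃ w : Fin n →₀ ℕ, ∑ i, w i = d ∧ p = monomial w (1 : k)} ↔
      ∀ w : Fin n →₀ ℕ, ∑ i, w i = d →
        expVec w ∈ Submodule.span ℤ (Set.range fun j => expVec (v j)) := by
  constructor
  · intro h w hw
    rw [← algebraMap_monomial_mem_fractionFieldOf_iff (k := k), h]
    exact algebraMap_mem_fractionFieldOf (Algebra.subset_adjoin ⟨w, hw, rfl⟩)
  · intro h
    refine le_antisymm (fractionFieldOf_le_fractionFieldOf ?_)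
      (fractionFieldOf_le_fractionFieldOf ?_)
    · rintro _ ⟨j, rfl⟩
      exact algebraMap_mem_fractionFieldOf (Algebra.subset_adjoin ⟨v j, hdeg j, rfl⟩)
    · rintro _ ⟨w, hw, rfl⟩
      exact (algebraMap_monomial_mem_fractionFieldOf_iff v w).2 (h w hw)

end FractionField

theorem stmt_6_general (n q d : ℕ) [NeZero n] (hd : 2 ≤ d) (k : Type*) [Field k]
    (v : Fin (q + 1) → (Fin n →₀ ℕ))
    (hdeg : ∀ j, ∑ i, v j i = d)
    (V : Submodule ℤ (Fin n → ℤ))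
    (hV : V = Submodule.span ℤ (Set.range fun j : Fin q =>
      (fun i => ((v 0) i : ℤ)) - (fun i => ((v j.succ) i : ℤ)))) :
    List.TFAE
      [ fractionFieldOf n k (Set.range fun j => monomial (v j) (1 : k)) =
          fractionFieldOf n k
            {p | ∃ w : Fin n →₀ ℕ, (∑ i, w i) = d ∧ p = monomial w (1 : k)},
        Module.Free ℤ ((Fin n → ℤ) ⧸ V) ∧
          Module.rank ℤ ((Fin n → ℤ) ⧸ V) = 1,
        (Matrix.of fun (i : Fin n) (j : Fin (q + 1)) => ((v j) i : ℚ) : Matrix (Fin n) (Fin (q + 1)) ℚ).rank = n ∧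
          V = Submodule.span ℤ
            {w : Fin n → ℤ | ∃ k' : Fin n, k' ≠ 0 ∧
              w = Pi.single 0 1 - Pi.single k' 1} ] := by
  have hd0 : d ≠ 0 := by omega
  set Λ := Submodule.span ℤ (Set.range fun j => expVec (v j))
  have hVΛ : V = Λ ⊓ LinearMap.ker coordSum :=
    hV.trans <| Submodule.span_range_sub_eq_span_inf_ker (u := fun j => expVec (v j))
      (f := coordSum) (d := (d : ℤ)) (Nat.cast_ne_zero.2 hd0) fun j => by
        rw [coordSum_expVec, hdeg]
  have hquot := Submodule.free_quotient_and_rank_eq_one_iff coordSum_surjective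
    (hVΛ ▸ inf_le_right : V ≤ LinearMap.ker coordSum)
  have hV_eq_iff : V = LinearMap.ker coordSum ↔ LinearMap.ker coordSum ≤ Λ := by
    rw [hVΛ, inf_eq_right]
  have hW := span_single_sub_single_eq_ker_coordSum (0 : Fin n)
  tfae_have 1 ↔ 2 := by
    rw [fractionFieldOf_eq_iff_forall_expVec_mem v hdeg,
      forall_expVec_mem_iff_ker_coordSum_le hd0 (hdeg 0)
        (Submodule.subset_span (Set.mem_range_self 0)), hquot, hV_eq_iff]
  tfae_have 2 → 3 := by
    intro h
    refine ⟨?_, (hquot.1 h).trans hW.symm⟩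
    simpa using rank_eq_card_of_ker_coordSum_le (hV_eq_iff.1 (hquot.1 h)) (j₀ := 0)
      (by rw [hdeg]; exact hd0)
  tfae_have 3 → 2 := fun ⟨_, h⟩ => hquot.2 (h.trans hW)
  tfae_finish

/-- For monomials `x^{v_1},…,x^{v_{q+1}}` of the same degree `d ≥ 2` the following are
equivalent: (a) `k[F] ⊆ k[x_d]` is birational; (b) `ℤ^n/ℤ⟨v_1 - v_j⟩` is free of rank
`1`; (c) the log-matrix has rank `n` and `ℤ⟨v_1 - v_j⟩ = ℤ⟨e_1 - e_k⟩`. -/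
theorem stmt_6 (n q d : ℕ) [NeZero n] (hd : 2 ≤ d) (k : Type*) [Field k]
    (v : Fin (q + 1) → (Fin n →₀ ℕ)) (hv : Function.Injective v)
    (hdeg : ∀ j, ∑ i, v j i = d)
    (V : Submodule ℤ (Fin n → ℤ))
    (hV : V = Submodule.span ℤ (Set.range fun j : Fin q =>
      (fun i => ((v 0) i : ℤ)) - (fun i => ((v j.succ) i : ℤ)))) :
    List.TFAE
      [ fractionFieldOf n k (Set.range fun j => monomial (v j) (1 : k)) =
          fractionFieldOf n k
            {p | ∃ w : Fin n →₀ ℕ, (∑ i, w i) = d ∧ p = monomial w (1 : k)},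
        Module.Free ℤ ((Fin n → ℤ) ⧸ V) ∧
          Module.rank ℤ ((Fin n → ℤ) ⧸ V) = 1,
        (Matrix.of fun (i : Fin n) (j : Fin (q + 1)) => ((v j) i : ℚ) : Matrix (Fin n) (Fin (q + 1)) ℚ).rank = n ∧
          V = Submodule.span ℤ
            {w : Fin n → ℤ | ∃ k' : Fin n, k' ≠ 0 ∧
              w = Pi.single 0 1 - Pi.single k' 1} ] :=
  stmt_6_general n q d hd k v hdeg V hV
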